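/- If for every i = 1, ..., n it holds that max_{k ≠ i} μ(W^i, X^k) < r_i, then for every data point x_j the representation produced by OMP(X_{-j}, x_j) with ε = 0 and k_max = N − 1 is subspace preserving. -/

import Mathlib

/-!
While the residual `q` of OMP on `X^i_{-j}` is a nonzero vector of `S_i`, its direction lies in
`W^i`, so every `x_m ∉ S_i` has `|⟪x_m, q⟫| ≤ μ(W^i, X^k) ‖q‖ < r_i ‖q‖`. On the other hand
`conv(±X^i_{-j})` contains the ball of radius `r(P^i_{-j})` of `S_i` centred at the origin, and
testing it against `q` gives some `x_m ∈ X^i_{-j}` with `|⟪x_m, q⟫| ≥ r(P^i_{-j}) ‖q‖`. Hence OMP on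
`X_{-j}` selects exactly the point that OMP on `X^i_{-j}` selects, the two runs coincide step by
step, and the support of the output consists of points of `S_i`.
-/

open scoped RealInnerProductSpace Classical

noncomputable section

namespace SSCOMP

variable {D : ℕ}

noncomputable def ompSelect {ι : Type*} [Fintype ι] [LinearOrder ι] [Nonempty ι]
    (a : ι → EuclideanSpace ℝ (Fin D)) (q : EuclideanSpace ℝ (Fin D)) : ι :=
  (Finset.univ.filter fun i => ∀ m, |⟪a m, q⟫| ≤ |⟪a i, q⟫|).min' (by
    obtain ⟨i, -, hi⟩ := Finset.exists_max_image (Finset.univ : Finset ι)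
      (fun m => |⟪a m, q⟫|) Finset.univ_nonempty
    exact ⟨i, Finset.mem_filter.mpr ⟨Finset.mem_univ i, fun m => hi m (Finset.mem_univ m)⟩⟩)

noncomputable def ompState {ι : Type*} [Fintype ι] [LinearOrder ι]
    (a : ι → EuclideanSpace ℝ (Fin D)) (b : EuclideanSpace ℝ (Fin D)) :
    ℕ → Finset ι × EuclideanSpace ℝ (Fin D)
  | 0 => (∅, b)
  | k + 1 =>
    let s := ompState a b k
    if s.2 = 0 then s
    else if h : Nonempty ι then
      haveI := h
      let T' : Finset ι := insert (ompSelect a s.2) s.1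
      (T', b - (Submodule.orthogonalProjection (Submodule.span ℝ (a '' (T' : Set ι))) b :
        EuclideanSpace ℝ (Fin D)))
    else s

noncomputable def ompSupport {ι : Type*} [Fintype ι] [LinearOrder ι]
    (a : ι → EuclideanSpace ℝ (Fin D)) (b : EuclideanSpace ℝ (Fin D)) (k : ℕ) : Finset ι :=
  (ompState a b k).1

noncomputable def ompResidual {ι : Type*} [Fintype ι] [LinearOrder ι]
    (a : ι → EuclideanSpace ℝ (Fin D)) (b : EuclideanSpace ℝ (Fin D)) (k : ℕ) :
    EuclideanSpace ℝ (Fin D) :=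
  (ompState a b k).2

def IsOMPOutput {ι : Type*} [Fintype ι] [LinearOrder ι]
    (a : ι → EuclideanSpace ℝ (Fin D)) (b : EuclideanSpace ℝ (Fin D)) (kmax : ℕ)
    (c : ι → ℝ) : Prop :=
  (∀ m, c m ≠ 0 → m ∈ ompSupport a b kmax) ∧
  ∀ c' : ι → ℝ, (∀ m, c' m ≠ 0 → m ∈ ompSupport a b kmax) →
    ‖b - ∑ m, c m • a m‖ ≤ ‖b - ∑ m, c' m • a m‖

/-- Set of normalized nonzero residual directions of OMP(a, b) run with `ε = 0`
and `k_max` large enough. -/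
noncomputable def residualDirs {ι : Type*} [Fintype ι] [LinearOrder ι]
    (a : ι → EuclideanSpace ℝ (Fin D)) (b : EuclideanSpace ℝ (Fin D)) :
    Set (EuclideanSpace ℝ (Fin D)) :=
  {w | ∃ k, ompResidual a b k ≠ 0 ∧ w = ‖ompResidual a b k‖⁻¹ • ompResidual a b k}

/-- Coherence between two sets of unit-norm points. -/
noncomputable def coherence (A B : Set (EuclideanSpace ℝ (Fin D))) : ℝ :=
  sSup {r : ℝ | ∃ u ∈ A, ∃ v ∈ B, r = |⟪u, v⟫|}

/-- Symmetrized convex hull `conv(±A)`. -/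
noncomputable def symmHull (A : Set (EuclideanSpace ℝ (Fin D))) :
    Set (EuclideanSpace ℝ (Fin D)) :=
  convexHull ℝ (A ∪ (-A))

/-- Inradius of a convex body: the radius of the largest Euclidean ball
(within the linear span of the body) inscribed in it. -/
noncomputable def inradius (P : Set (EuclideanSpace ℝ (Fin D))) : ℝ :=
  sSup {r : ℝ | 0 ≤ r ∧ ∃ c ∈ Submodule.span ℝ P,
    ∀ y ∈ Submodule.span ℝ P, ‖y - c‖ ≤ r → y ∈ P}

variable {n N : ℕ}

/-- `X^i`: the set of data points lying in the `i`-th subspace. -/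
noncomputable def subX (S : Fin n → Submodule ℝ (EuclideanSpace ℝ (Fin D)))
    (x : Fin N → EuclideanSpace ℝ (Fin D)) (i : Fin n) : Set (EuclideanSpace ℝ (Fin D)) :=
  x '' {m | x m ∈ S i}

/-- `X^i_{-j}`: the set of data points lying in the `i`-th subspace, with `x j` removed. -/
noncomputable def subXmin (S : Fin n → Submodule ℝ (EuclideanSpace ℝ (Fin D)))
    (x : Fin N → EuclideanSpace ℝ (Fin D)) (i : Fin n) (j : Fin N) :
    Set (EuclideanSpace ℝ (Fin D)) :=
  x '' {m | x m ∈ S i ∧ m ≠ j}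

/-- `W_j^i`: the set of OMP residual directions associated with `X^i_{-j}` and `x j`. -/
noncomputable def Wji (S : Fin n → Submodule ℝ (EuclideanSpace ℝ (Fin D)))
    (x : Fin N → EuclideanSpace ℝ (Fin D)) (i : Fin n) (j : Fin N) :
    Set (EuclideanSpace ℝ (Fin D)) :=
  residualDirs (fun m : {m : Fin N // x m ∈ S i ∧ m ≠ j} => x m.1) (x j)

/-- `W^i`: the set of OMP residual directions associated with `X^i`. -/
noncomputable def Wfull (S : Fin n → Submodule ℝ (EuclideanSpace ℝ (Fin D)))
    (x : Fin N → EuclideanSpace ℝ (Fin D)) (i : Fin n) : Set (EuclideanSpace ℝ (Fin D)) :=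
  ⋃ j ∈ {j : Fin N | x j ∈ S i}, Wji S x i j

/-- `r_i := min_{j : x_j ∈ S_i} r(P^i_{-j})`. -/
noncomputable def rMin (S : Fin n → Submodule ℝ (EuclideanSpace ℝ (Fin D)))
    (x : Fin N → EuclideanSpace ℝ (Fin D)) (i : Fin n) : ℝ :=
  sInf {r : ℝ | ∃ j, x j ∈ S i ∧ r = inradius (symmHull (subXmin S x i j))}

/-- Cosine of the principal angle between two subspaces. -/
noncomputable def cosAngle (Si Sk : Submodule ℝ (EuclideanSpace ℝ (Fin D))) : ℝ :=
  sSup {r : ℝ | ∃ u ∈ Si, ∃ v ∈ Sk, ‖u‖ = 1 ∧ ‖v‖ = 1 ∧ r = ⟪u, v⟫}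


section Inradius

variable {A : Set (EuclideanSpace ℝ (Fin D))}

lemma span_symmHull :
    Submodule.span ℝ (symmHull A) = Submodule.span ℝ A := by
  refine le_antisymm (Submodule.span_le.mpr ?_)
    (Submodule.span_mono (Set.subset_union_left.trans (subset_convexHull ℝ _)))
  refine convexHull_min ?_ (Submodule.span ℝ A).convex
  rintro y (hy | hy)
  · exact Submodule.subset_span hy
  · simpa using (Submodule.span ℝ A).neg_mem (Submodule.subset_span (Set.mem_neg.mp hy))

lemma neg_mem_symmHull {p : EuclideanSpace ℝ (Fin D)} (hp : p ∈ symmHull A) :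
    -p ∈ symmHull A := by
  have hsymm : -(A ∪ -A) = A ∪ -A := by
    rw [Set.union_neg, neg_neg, Set.union_comm]
  rw [← Set.mem_neg, symmHull, ← convexHull_neg, hsymm]
  exact hp

lemma mem_symmHull_of_norm_le {c v : EuclideanSpace ℝ (Fin D)} {r : ℝ}
    (hc : c ∈ Submodule.span ℝ (symmHull A))
    (hball : ∀ y ∈ Submodule.span ℝ (symmHull A), ‖y - c‖ ≤ r → y ∈ symmHull A)
    (hv : v ∈ Submodule.span ℝ (symmHull A)) (hvr : ‖v‖ ≤ r) : v ∈ symmHull A := by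
  have hplus : c + v ∈ symmHull A :=
    hball _ (Submodule.add_mem _ hc hv) (by rwa [add_sub_cancel_left])
  have hminus : -(c - v) ∈ symmHull A :=
    neg_mem_symmHull
      (hball _ (Submodule.sub_mem _ hc hv) (by rwa [sub_sub_cancel_left, norm_neg]))
  -- `v` is the midpoint of `c + v` and `-(c - v)`
  have hmid := convex_convexHull ℝ _ hplus hminus (by norm_num : (0 : ℝ) ≤ 1 / 2)
    (by norm_num : (0 : ℝ) ≤ 1 / 2) (by norm_num)
  have hv : (1 / 2 : ℝ) • (c + v) + (1 / 2 : ℝ) • -(c - v) = v := by module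
  rwa [hv] at hmid

lemma inner_le_of_mem_symmHull {q p : EuclideanSpace ℝ (Fin D)} {M : ℝ}
    (hM : ∀ a ∈ A, |⟪a, q⟫| ≤ M) (hp : p ∈ symmHull A) : ⟪q, p⟫ ≤ M := by
  refine convexHull_min ?_ (convex_halfSpace_le (innerₛₗ ℝ q).isLinear M) hp
  intro y hy
  have hyq : |⟪y, q⟫| ≤ M := by
    rcases hy with hy | hy
    · exact hM y hy
    · simpa only [inner_neg_left, abs_neg, neg_neg] using hM _ (Set.mem_neg.mp hy)
  show ⟪q, y⟫ ≤ M
  rw [real_inner_comm]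
  exact (le_abs_self _).trans hyq

lemma inradius_nonneg (P : Set (EuclideanSpace ℝ (Fin D))) : 0 ≤ inradius P :=
  Real.sSup_nonneg fun _ hr => hr.1

lemma inradius_symmHull_mul_norm_le {q : EuclideanSpace ℝ (Fin D)} {M : ℝ}
    (hq : q ∈ Submodule.span ℝ A) (hM0 : 0 ≤ M) (hM : ∀ a ∈ A, |⟪a, q⟫| ≤ M) :
    inradius (symmHull A) * ‖q‖ ≤ M := by
  rcases eq_or_ne q 0 with rfl | hq0
  · simpa using hM0
  have hqpos : 0 < ‖q‖ := norm_pos_iff.mpr hq0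
  rw [← le_div_iff₀ hqpos]
  refine Real.sSup_le ?_ (div_nonneg hM0 hqpos.le)
  rintro r ⟨hr0, c, hc, hball⟩
  set v := (r / ‖q‖) • q
  have hv : v ∈ Submodule.span ℝ (symmHull A) := by
    rw [span_symmHull]; exact Submodule.smul_mem _ _ hq
  have hvr : ‖v‖ = r := by
    rw [norm_smul, Real.norm_of_nonneg (div_nonneg hr0 hqpos.le), div_mul_cancel₀ _ hqpos.ne']
  have hqv : ⟪q, v⟫ = r * ‖q‖ := by
    rw [real_inner_smul_right, real_inner_self_eq_norm_sq]
    field_simp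
  rw [le_div_iff₀ hqpos, ← hqv]
  exact inner_le_of_mem_symmHull hM (mem_symmHull_of_norm_le hc hball hv hvr.le)

end Inradius

lemma abs_inner_le_coherence {A B : Set (EuclideanSpace ℝ (Fin D))}
    (hA : ∀ u ∈ A, ‖u‖ ≤ 1) (hB : ∀ v ∈ B, ‖v‖ ≤ 1) {u v : EuclideanSpace ℝ (Fin D)}
    (hu : u ∈ A) (hv : v ∈ B) : |⟪u, v⟫| ≤ coherence A B := by
  refine le_csSup ⟨1, ?_⟩ ⟨u, hu, v, hv, rfl⟩
  rintro _ ⟨u, hu, v, hv, rfl⟩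
  calc |⟪u, v⟫| ≤ ‖u‖ * ‖v‖ := abs_real_inner_le_norm u v
    _ ≤ 1 := mul_le_one₀ (hA u hu) (norm_nonneg v) (hB v hv)

section OMP

variable {ι κ : Type*} [Fintype ι] [LinearOrder ι] [Fintype κ] [LinearOrder κ]

lemma norm_of_mem_residualDirs {a : ι → EuclideanSpace ℝ (Fin D)}
    {b w : EuclideanSpace ℝ (Fin D)} (hw : w ∈ residualDirs a b) : ‖w‖ = 1 := by
  obtain ⟨k, hk, rfl⟩ := hw
  rw [norm_smul, norm_inv, norm_norm, inv_mul_cancel₀ (norm_ne_zero_iff.mpr hk)]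

lemma abs_inner_le_abs_inner_ompSelect [Nonempty ι] (a : ι → EuclideanSpace ℝ (Fin D))
    (q : EuclideanSpace ℝ (Fin D)) (m : ι) : |⟪a m, q⟫| ≤ |⟪a (ompSelect a q), q⟫| := by
  unfold ompSelect
  exact (Finset.mem_filter.mp
    (Finset.min'_mem (Finset.univ.filter fun i => ∀ m, |⟪a m, q⟫| ≤ |⟪a i, q⟫|) _)).2 m

lemma ompSelect_le [Nonempty ι] {a : ι → EuclideanSpace ℝ (Fin D)}
    {q : EuclideanSpace ℝ (Fin D)} {m : ι} (hm : ∀ m', |⟪a m', q⟫| ≤ |⟪a m, q⟫|) :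
    ompSelect a q ≤ m := by
  unfold ompSelect
  exact Finset.min'_le _ _ (Finset.mem_filter.mpr ⟨Finset.mem_univ _, hm⟩)

/-- Monotonicity of `e` makes the smallest-index tie-breaking agree on both dictionaries. -/
lemma ompSelect_eq_of_strictMono [Nonempty ι] [Nonempty κ] {e : κ → ι} (he : StrictMono e)
    {a : ι → EuclideanSpace ℝ (Fin D)} {q : EuclideanSpace ℝ (Fin D)}
    (hdom : ∀ m, m ∉ Set.range e → ∃ k, |⟪a m, q⟫| < |⟪a (e k), q⟫|) :
    ompSelect a q = e (ompSelect (a ∘ e) q) := by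
  have hmax := abs_inner_le_abs_inner_ompSelect (a ∘ e) q
  have hrange : ompSelect a q ∈ Set.range e := by
    by_contra hout
    obtain ⟨k, hk⟩ := hdom _ hout
    exact (abs_inner_le_abs_inner_ompSelect a q (e k)).not_gt hk
  obtain ⟨k, hk⟩ := hrange
  refine le_antisymm (ompSelect_le fun m => ?_) ?_
  · by_cases hm : m ∈ Set.range e
    · obtain ⟨k', rfl⟩ := hm
      exact hmax k'
    · obtain ⟨k', hk'⟩ := hdom m hm
      exact hk'.le.trans (hmax k')
  · rw [← hk]
    refine he.monotone (ompSelect_le fun k' => ?_)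
    simpa only [Function.comp_apply, hk] using abs_inner_le_abs_inner_ompSelect a q (e k')

lemma ompResidual_mem {V : Submodule ℝ (EuclideanSpace ℝ (Fin D))}
    {a : ι → EuclideanSpace ℝ (Fin D)} {b : EuclideanSpace ℝ (Fin D)}
    (ha : ∀ m, a m ∈ V) (hb : b ∈ V) (k : ℕ) : ompResidual a b k ∈ V := by
  induction k with
  | zero => exact hb
  | succ k ih =>
    rw [ompResidual, ompState]
    split_ifs
    · exact ih
    · refine V.sub_mem hb (Submodule.span_le.mpr ?_ (Submodule.coe_mem _))
      rintro _ ⟨m, -, rfl⟩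
      exact ha m
    · exact ih

lemma ompState_succ_of_ompResidual_eq_zero (a : ι → EuclideanSpace ℝ (Fin D))
    (b : EuclideanSpace ℝ (Fin D)) {k : ℕ} (h : ompResidual a b k = 0) :
    ompState a b (k + 1) = ompState a b k :=
  if_pos h

lemma ompState_succ [Nonempty ι] (a : ι → EuclideanSpace ℝ (Fin D))
    (b : EuclideanSpace ℝ (Fin D)) {k : ℕ} (h : ompResidual a b k ≠ 0) :
    ompState a b (k + 1) =
      (insert (ompSelect a (ompResidual a b k)) (ompSupport a b k),
        b - (Submodule.span ℝ
          (a '' ↑(insert (ompSelect a (ompResidual a b k)) (ompSupport a b k)))).starProjection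
          b) := by
  rw [ompState, if_neg (show (ompState a b k).2 ≠ 0 from h), dif_pos ‹_›]
  rfl

lemma ompState_eq_of_ompSelect_eq [Nonempty ι] [Nonempty κ] (e : κ → ι)
    (a : ι → EuclideanSpace ℝ (Fin D)) (b : EuclideanSpace ℝ (Fin D))
    (hsel : ∀ k, ompResidual (a ∘ e) b k ≠ 0 →
      ompSelect a (ompResidual (a ∘ e) b k) = e (ompSelect (a ∘ e) (ompResidual (a ∘ e) b k)))
    (k : ℕ) : ompState a b k = ((ompState (a ∘ e) b k).1.image e, (ompState (a ∘ e) b k).2) := by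
  induction k with
  | zero => simp [ompState]
  | succ k ih =>
    by_cases h0 : ompResidual (a ∘ e) b k = 0
    · have h0' : ompResidual a b k = 0 := by rwa [ompResidual, ih]
      rw [ompState_succ_of_ompResidual_eq_zero _ _ h0,
        ompState_succ_of_ompResidual_eq_zero _ _ h0', ih]
    · have hres : ompResidual a b k = ompResidual (a ∘ e) b k := by rw [ompResidual, ih]; rfl
      have hsupp : ompSupport a b k = (ompSupport (a ∘ e) b k).image e := by
        rw [ompSupport, ih]; rfl
      rw [ompState_succ _ _ h0, ompState_succ _ _ (hres ▸ h0), hres, hsel k h0, hsupp,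
        ← Finset.image_insert]
      simp only [Finset.coe_image, ← Set.image_comp]

end OMP

section SubspaceData

variable {S : Fin n → Submodule ℝ (EuclideanSpace ℝ (Fin D))}
  {x : Fin N → EuclideanSpace ℝ (Fin D)} {i : Fin n} {j : Fin N}

lemma norm_of_mem_Wfull {w : EuclideanSpace ℝ (Fin D)} (hw : w ∈ Wfull S x i) : ‖w‖ = 1 := by
  obtain ⟨j, -, hw⟩ := Set.mem_iUnion₂.mp hw
  exact norm_of_mem_residualDirs hw

lemma rMin_le_inradius (hij : x j ∈ S i) : rMin S x i ≤ inradius (symmHull (subXmin S x i j)) :=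
  csInf_le ⟨0, by rintro _ ⟨_, _, rfl⟩; exact inradius_nonneg _⟩ ⟨j, hij, rfl⟩

lemma abs_inner_lt_rMin (hunit : ∀ m, ‖x m‖ = 1)
    (hcond : sSup {r : ℝ | ∃ k, k ≠ i ∧ r = coherence (Wfull S x i) (subX S x k)} < rMin S x i)
    {w : EuclideanSpace ℝ (Fin D)} (hw : w ∈ Wfull S x i) {m : Fin N} {k : Fin n} (hki : k ≠ i)
    (hmk : x m ∈ S k) : |⟪w, x m⟫| < rMin S x i := by
  have hbdd : BddAbove {r : ℝ | ∃ k, k ≠ i ∧ r = coherence (Wfull S x i) (subX S x k)} :=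
    ((Set.finite_range fun k => coherence (Wfull S x i) (subX S x k)).subset
      (by rintro _ ⟨k, -, rfl⟩; exact ⟨k, rfl⟩)).bddAbove
  calc |⟪w, x m⟫| ≤ coherence (Wfull S x i) (subX S x k) :=
        abs_inner_le_coherence (fun u hu => (norm_of_mem_Wfull hu).le)
          (by rintro _ ⟨m', -, rfl⟩; exact (hunit m').le) hw ⟨m, hmk, rfl⟩
    _ ≤ sSup {r : ℝ | ∃ k, k ≠ i ∧ r = coherence (Wfull S x i) (subX S x k)} :=
        le_csSup hbdd ⟨k, hki, rfl⟩
    _ < rMin S x i := hcond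

lemma nonempty_of_span_subXmin (hspan : Submodule.span ℝ (subXmin S x i j) = S i)
    {v : EuclideanSpace ℝ (Fin D)} (hv : v ∈ S i) (hv0 : v ≠ 0) :
    Nonempty {m : Fin N // x m ∈ S i ∧ m ≠ j} := by
  by_contra h
  have hempty : subXmin S x i j = ∅ :=
    Set.image_eq_empty.mpr (Set.eq_empty_iff_forall_notMem.mpr fun m hm => h ⟨⟨m, hm⟩⟩)
  rw [← hspan, hempty, Submodule.span_empty, Submodule.mem_bot] at hv
  exact hv0 hv

lemma exists_abs_inner_gt_of_notMem (hunit : ∀ m, ‖x m‖ = 1) (hmem : ∀ m, ∃ k, x m ∈ S k)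
    (hspan : Submodule.span ℝ (subXmin S x i j) = S i) (hij : x j ∈ S i)
    (hcond : sSup {r : ℝ | ∃ k, k ≠ i ∧ r = coherence (Wfull S x i) (subX S x k)} < rMin S x i)
    {q : EuclideanSpace ℝ (Fin D)} (hq : q ∈ S i) (hq0 : q ≠ 0) (hw : ‖q‖⁻¹ • q ∈ Wfull S x i)
    {m : Fin N} (hm : x m ∉ S i) :
    ∃ k : {m : Fin N // x m ∈ S i ∧ m ≠ j}, |⟪x m, q⟫| < |⟪x k.1, q⟫| := by
  have := nonempty_of_span_subXmin hspan hq hq0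
  obtain ⟨k₀, -, hk₀⟩ := Finset.exists_max_image Finset.univ
    (fun k : {m : Fin N // x m ∈ S i ∧ m ≠ j} => |⟪x k.1, q⟫|) Finset.univ_nonempty
  obtain ⟨k, hmk⟩ := hmem m
  have hki : k ≠ i := by rintro rfl; exact hm hmk
  have hqpos : 0 < ‖q‖ := norm_pos_iff.mpr hq0
  refine ⟨k₀, ?_⟩
  calc |⟪x m, q⟫| = |⟪‖q‖⁻¹ • q, x m⟫| * ‖q‖ := by
        rw [real_inner_smul_left, abs_mul, abs_inv, abs_norm, real_inner_comm]
        field_simp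
    _ < rMin S x i * ‖q‖ :=
        mul_lt_mul_of_pos_right (abs_inner_lt_rMin hunit hcond hw hki hmk) hqpos
    _ ≤ inradius (symmHull (subXmin S x i j)) * ‖q‖ :=
        mul_le_mul_of_nonneg_right (rMin_le_inradius hij) hqpos.le
    _ ≤ |⟪x k₀.1, q⟫| := inradius_symmHull_mul_norm_le (hspan ▸ hq) (abs_nonneg _)
        (by rintro _ ⟨m', hm', rfl⟩; exact hk₀ ⟨m', hm'⟩ (Finset.mem_univ _))

end SubspaceData

/-- **Theorem 2.** If for every `i` one has `max_{k ≠ i} μ(W^i, X^k) < r_i`,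
then for every data point the representation produced by OMP (with `ε = 0` and
`k_max = N − 1`) is subspace preserving. -/
theorem sscOmp_coherenceResidual_lt_inradius_subspacePreserving
    {D n N : ℕ} (S : Fin n → Submodule ℝ (EuclideanSpace ℝ (Fin D)))
    (x : Fin N → EuclideanSpace ℝ (Fin D))
    (hunit : ∀ j, ‖x j‖ = 1)
    (hmem : ∀ j, ∃ i, x j ∈ S i)
    (hrank : ∀ i, ∀ j, x j ∈ S i → Submodule.span ℝ (subXmin S x i j) = S i)
    (hcond : ∀ i : Fin n,
      sSup {r : ℝ | ∃ k, k ≠ i ∧ r = coherence (Wfull S x i) (subX S x k)} < rMin S x i) :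
    ∀ (j : Fin N) (i : Fin n), x j ∈ S i →
      ∀ c : {m : Fin N // m ≠ j} → ℝ,
        IsOMPOutput (fun m => x m.1) (x j) (N - 1) c →
        ∀ m, c m ≠ 0 → x m.1 ∈ S i := by
  intro j i hij c hc m hm
  have hspan := hrank i j hij
  have := nonempty_of_span_subXmin hspan hij (norm_ne_zero_iff.mp (by simp [hunit j]))
  let e : {m : Fin N // x m ∈ S i ∧ m ≠ j} → {m : Fin N // m ≠ j} := fun m => ⟨m.1, m.2.2⟩
  have := Nonempty.map e ‹_›
  have he : StrictMono e := fun _ _ h => h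
  have hrun := ompState_eq_of_ompSelect_eq e (fun m => x m.1) (x j) (fun k hk =>
    ompSelect_eq_of_strictMono he fun m' hm' =>
      exists_abs_inner_gt_of_notMem hunit hmem hspan hij (hcond i)
        (ompResidual_mem (fun m => m.2.1) hij k) hk (Set.mem_biUnion hij ⟨k, hk, rfl⟩)
        fun hx => hm' ⟨⟨m'.1, hx, m'.2⟩, rfl⟩) (N - 1)
  have hsupp := hc.1 m hm
  rw [ompSupport, hrun] at hsupp
  obtain ⟨m', -, rfl⟩ := Finset.mem_image.mp hsupp
  exact m'.2.1

end SSCOMP
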